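/- arXiv:1509.04313 — 2 statements merged into one kernel-verified Lean document; each statement's English description precedes it below -/
import Mathlib

section
/- If the number of medals of each type is unbounded, then for every function f : ℕ³ → ℕ there exist triples x >_lex y with f(x) ≤ f(y). Equivalently, no f : ℕ³ → ℕ is a strict order homomorphism from lex order to the usual order on ℕ. -/
def LexGt (a b : ℕ × ℕ × ℕ) : Prop :=
  a.1 > b.1 ∨ (a.1 = b.1 ∧ (a.2.1 > b.2.1 ∨ (a.2.1 = b.2.1 ∧ a.2.2 > b.2.2)))

theorem stmt_11 (f : ℕ × ℕ × ℕ → ℕ) :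
    ∃ x y : ℕ × ℕ × ℕ, LexGt x y ∧ f x ≤ f y := by
  by_contra hc
  push_neg at hc
  have mono : StrictMono (fun k => f (0, k, 0)) :=
    fun a b hab => hc (0, b, 0) (0, a, 0) (Or.inr ⟨rfl, Or.inl hab⟩)
  have h1 : ∀ k, f (0, k, 0) < f (1, 0, 0) :=
    fun k => hc (1, 0, 0) (0, k, 0) (Or.inl Nat.one_pos)
  have h2 := mono.le_apply (x := f (1, 0, 0) + 1)
  have h3 := h1 (f (1, 0, 0) + 1)
  omega
end

section
/- If f : ℕ³ → R is defined by f(g,s,b) = g·x² + s·x + b for some x in a linearly ordered commutative ring R, then f is strictly monotone with respect to lex order on all of ℕ³ if and only if x > m for every m : ℕ. -/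
theorem stmt_16 {R : Type*} [CommRing R] [LinearOrder R] [IsStrictOrderedRing R] (x : R) :
    (∀ A B : ℕ × ℕ × ℕ, LexGt A B →
      (A.1 : R) * x ^ 2 + (A.2.1 : R) * x + (A.2.2 : R) >
        (B.1 : R) * x ^ 2 + (B.2.1 : R) * x + (B.2.2 : R)) ↔
    (∀ m : ℕ, (m : R) < x) := by
  constructor
  · intro h m
    have := h (0, 1, 0) (0, 0, m) (Or.inr ⟨rfl, Or.inl one_pos⟩)
    simpa using this
  · intro h
    rintro ⟨g, s, b⟩ ⟨g', s', b'⟩ hAB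
    have hx0 : (0 : R) < x := by simpa using h 0
    simp only at hAB ⊢
    have hs0 : (0 : R) ≤ (s : R) := Nat.cast_nonneg s
    have hb0 : (0 : R) ≤ (b : R) := Nat.cast_nonneg b
    rcases hAB with h1 | ⟨h1, h2 | ⟨h2, h3⟩⟩
    · have hg : (g' : R) + 1 ≤ (g : R) := by exact_mod_cast h1
      have hs' : ((s' : R) + 1) < x := by exact_mod_cast h (s' + 1)
      have hb' : (b' : R) < x := h b'
      nlinarith [mul_pos hx0 hx0, mul_nonneg hs0 hx0.le,
        mul_le_mul_of_nonneg_right hg (sq_nonneg x),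
        mul_lt_mul_of_pos_right hs' hx0]
    · subst h1
      have hs2 : (s' : R) + 1 ≤ (s : R) := by exact_mod_cast h2
      have hb' : (b' : R) < x := h b'
      nlinarith [mul_le_mul_of_nonneg_right hs2 hx0.le]
    · subst h1; subst h2
      have : (b' : R) < (b : R) := by exact_mod_cast h3
      linarith
end
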